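/- arXiv:1312.7840 — 4 statements merged into one kernel-verified Lean document; each statement's English description precedes it below -/
import Mathlib

section
/- For every λ > 0, the soft-threshold risk at zero R(0,λ) = E(|Z| - λ)_+^2, where Z is standard normal, satisfies 4Φ(-λ)/(λ² + 5) ≤ R(0,λ) ≤ 4Φ(-λ)/(λ² + 2), where Φ is the standard normal CDF. -/
open MeasureTheory Set

noncomputable def stdPDF (x : ℝ) : ℝ := Real.exp (-x^2/2) / Real.sqrt (2*Real.pi)

noncomputable def stdCDF (t : ℝ) : ℝ := ∫ x in Set.Iic t, stdPDF x

/-- Risk of soft thresholding at the origin: R(0,λ) = E(|Z|-λ)_+² = 2∫_λ^∞ (x-λ)² φ(x) dx. -/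
noncomputable def R0 (lam : ℝ) : ℝ := 2 * ∫ x in Set.Ioi lam, (x - lam)^2 * stdPDF x

/-!
Integrating `(x - λ)² φ(x)` by parts gives `R(0,λ) = 2((λ² + 1) Φ(-λ) - λ φ(λ))`, so both bounds
are equivalent to the Mills-ratio bounds
`λ(λ² + 5) / (λ⁴ + 6λ² + 3) ≤ Φ(-λ) / φ(λ) ≤ (λ² + 2) / (λ(λ² + 3))`.
For a rational `r`, the function `r φ - Φ(-·)` vanishes at infinity and has derivative
`(r' - t r + 1) φ`; for these two choices of `r` that factor is `-6 / (t²(t² + 3)²)`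
resp. `24 / (t⁴ + 6t² + 3)²`, of constant sign, which gives the two inequalities.
-/

open Real Filter Topology

lemma stdPDF_pos (x : ℝ) : 0 < stdPDF x := by
  unfold stdPDF
  positivity

lemma stdPDF_neg (x : ℝ) : stdPDF (-x) = stdPDF x := by
  simp [stdPDF]

lemma stdPDF_eq_exp_mul (x : ℝ) : stdPDF x = Real.exp (-(1/2) * x^2) * (√(2*π))⁻¹ := by
  rw [stdPDF]; ring_nf

lemma continuous_stdPDF : Continuous stdPDF := by
  unfold stdPDF
  fun_prop

lemma integrable_pow_mul_stdPDF (n : ℕ) : Integrable (fun x => x ^ n * stdPDF x) := by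
  have h := integrable_rpow_mul_exp_neg_mul_sq (b := 1/2) (by norm_num) (s := n)
    (by linarith [n.cast_nonneg (α := ℝ)])
  simp only [Real.rpow_natCast] at h
  simpa [stdPDF_eq_exp_mul, mul_assoc] using h.mul_const (√(2*π))⁻¹

lemma integrable_stdPDF : Integrable stdPDF := by
  simpa using integrable_pow_mul_stdPDF 0

lemma tendsto_pow_mul_stdPDF_atTop (n : ℕ) :
    Tendsto (fun x => x ^ n * stdPDF x) atTop (𝓝 0) := by
  have h0 : Tendsto (fun x : ℝ => Real.exp (-(1/2) * x)) atTop (𝓝 0) := by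
    rw [Real.tendsto_exp_comp_nhds_zero]
    exact tendsto_id.const_mul_atTop_of_neg (by norm_num)
  have h := ((rpow_mul_exp_neg_mul_sq_isLittleO_exp_neg (b := 1/2) (by norm_num) n)
    |>.tendsto_zero_of_tendsto h0).mul_const (√(2*π))⁻¹
  simp only [Real.rpow_natCast, zero_mul] at h
  simpa [stdPDF_eq_exp_mul, mul_assoc] using h

lemma tendsto_stdPDF_atTop : Tendsto stdPDF atTop (𝓝 0) := by
  simpa using tendsto_pow_mul_stdPDF_atTop 0

lemma tendsto_mul_stdPDF_atTop_of_bounded {r : ℝ → ℝ} {C : ℝ} (hr : ∀ᶠ t in atTop, |r t| ≤ C) :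
    Tendsto (fun t => r t * stdPDF t) atTop (𝓝 0) :=
  isBoundedUnder_le_mul_tendsto_zero ⟨C, by simpa using hr⟩ tendsto_stdPDF_atTop

lemma hasDerivAt_stdPDF (x : ℝ) : HasDerivAt stdPDF (-(x * stdPDF x)) x := by
  have h : HasDerivAt (fun x : ℝ => -x^2/2) (-x) x :=
    ((hasDerivAt_pow 2 x).neg.div_const 2).congr_deriv (by ring)
  exact (h.exp.div_const (√(2*π))).congr_deriv (by unfold stdPDF; ring)

lemma stdCDF_neg (t : ℝ) : stdCDF (-t) = ∫ x in Ioi t, stdPDF x := by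
  simpa [stdCDF, stdPDF_neg] using integral_comp_neg_Iic (-t) stdPDF

lemma hasDerivAt_stdCDF_neg (x : ℝ) : HasDerivAt (fun t => stdCDF (-t)) (-stdPDF x) x := by
  have hCDF : ∀ t, stdCDF t = stdCDF 0 + ∫ u in (0:ℝ)..t, stdPDF u := fun t => by
    rw [stdCDF, stdCDF, ← intervalIntegral.integral_Iic_sub_Iic integrable_stdPDF.integrableOn
      integrable_stdPDF.integrableOn]
    ring
  have h : HasDerivAt stdCDF (stdPDF (-x)) (-x) := by
    rw [funext hCDF]
    exact (continuous_stdPDF.integral_hasStrictDerivAt 0 (-x)).hasDerivAt.const_add _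
  exact (h.comp x (hasDerivAt_neg x)).congr_deriv (by simp [stdPDF_neg])

lemma tendsto_stdCDF_neg_atTop : Tendsto (fun t => stdCDF (-t)) atTop (𝓝 0) := by
  have hIic : Tendsto (fun t : ℝ => ∫ x in Iic t, stdPDF x) atTop (𝓝 (∫ x, stdPDF x)) :=
    (aecover_Iic tendsto_id).integral_tendsto_of_countably_generated integrable_stdPDF
  have hsplit : ∀ t : ℝ, stdCDF (-t) = (∫ x, stdPDF x) - ∫ x in Iic t, stdPDF x := fun t => by
    rw [stdCDF_neg, ← intervalIntegral.integral_Iic_add_Ioi (b := t)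
      integrable_stdPDF.integrableOn integrable_stdPDF.integrableOn]
    ring
  simpa [hsplit] using (tendsto_const_nhds (x := ∫ x, stdPDF x)).sub hIic

lemma integral_Ioi_sub_sq_mul_stdPDF (lam : ℝ) :
    ∫ x in Ioi lam, (x - lam)^2 * stdPDF x = (lam^2 + 1) * stdCDF (-lam) - lam * stdPDF lam := by
  set G : ℝ → ℝ := fun x => -(x - 2*lam) * stdPDF x - (lam^2 + 1) * stdCDF (-x)
  have hderiv : ∀ x ∈ Ici lam, HasDerivAt G ((x - lam)^2 * stdPDF x) x := fun x _ => by
    refine (((((hasDerivAt_id x).sub_const _).neg).mul (hasDerivAt_stdPDF x)).sub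
      ((hasDerivAt_stdCDF_neg x).const_mul (lam^2 + 1))).congr_deriv ?_
    simp only [id_eq, Pi.neg_apply]
    ring
  have hint : IntegrableOn (fun x => (x - lam)^2 * stdPDF x) (Ioi lam) := by
    have hexpand : (fun x : ℝ => (x - lam)^2 * stdPDF x)
        = fun x => x^2 * stdPDF x - 2*lam * (x^1 * stdPDF x) + lam^2 * (x^0 * stdPDF x) := by
      funext x; ring
    rw [hexpand]
    exact (((integrable_pow_mul_stdPDF 2).sub ((integrable_pow_mul_stdPDF 1).const_mul _)).add
      ((integrable_pow_mul_stdPDF 0).const_mul _)).integrableOn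
  have hlim : Tendsto G atTop (𝓝 0) := by
    have h := ((tendsto_pow_mul_stdPDF_atTop 1).neg.add (tendsto_stdPDF_atTop.const_mul (2*lam))).sub
      (tendsto_stdCDF_neg_atTop.const_mul (lam^2 + 1))
    simp only [neg_zero, mul_zero, add_zero, sub_zero] at h
    exact h.congr fun x => by simp only [G]; ring
  rw [integral_Ioi_of_hasDerivAt_of_tendsto' hderiv hint hlim]
  simp only [G]
  ring

lemma R0_eq (lam : ℝ) : R0 lam = 2 * ((lam^2 + 1) * stdCDF (-lam) - lam * stdPDF lam) := by
  rw [R0, integral_Ioi_sub_sq_mul_stdPDF]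

lemma nonneg_of_hasDerivAt_nonpos_of_tendsto_zero {f f' : ℝ → ℝ} {a : ℝ}
    (hf : ∀ x ∈ Ici a, HasDerivAt f (f' x) x) (hf' : ∀ x ∈ Ioi a, f' x ≤ 0)
    (hlim : Tendsto f atTop (𝓝 0)) : 0 ≤ f a := by
  have hanti : AntitoneOn f (Ici a) := by
    refine antitoneOn_of_deriv_nonpos (convex_Ici a)
      (fun x hx => (hf x hx).continuousAt.continuousWithinAt) (fun x hx => ?_) (fun x hx => ?_)
    · rw [interior_Ici] at hx
      exact (hf x (mem_Ici_of_Ioi hx)).differentiableAt.differentiableWithinAt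
    · rw [interior_Ici] at hx
      rw [(hf x (mem_Ici_of_Ioi hx)).deriv]
      exact hf' x hx
  refine le_of_tendsto hlim ?_
  filter_upwards [eventually_ge_atTop a] with b hb
  exact hanti self_mem_Ici hb hb

lemma nonpos_of_hasDerivAt_nonneg_of_tendsto_zero {f f' : ℝ → ℝ} {a : ℝ}
    (hf : ∀ x ∈ Ici a, HasDerivAt f (f' x) x) (hf' : ∀ x ∈ Ioi a, 0 ≤ f' x)
    (hlim : Tendsto f atTop (𝓝 0)) : f a ≤ 0 := by
  have := nonneg_of_hasDerivAt_nonpos_of_tendsto_zero (f := fun x => -f x)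
    (fun x hx => (hf x hx).neg) (fun x hx => neg_nonpos.mpr (hf' x hx)) (by simpa using hlim.neg)
  simpa using this

lemma hasDerivAt_mul_stdPDF_sub_stdCDF_neg {r : ℝ → ℝ} {r' t : ℝ} (hr : HasDerivAt r r' t) :
    HasDerivAt (fun t => r t * stdPDF t - stdCDF (-t)) ((r' - t * r t + 1) * stdPDF t) t :=
  ((hr.mul (hasDerivAt_stdPDF t)).sub (hasDerivAt_stdCDF_neg t)).congr_deriv (by ring)

section MillsRatio

variable {r r' : ℝ → ℝ} {a : ℝ}

lemma stdCDF_neg_le_mul_stdPDF (hr : ∀ t ∈ Ici a, HasDerivAt r (r' t) t)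
    (hsign : ∀ t ∈ Ioi a, r' t - t * r t + 1 ≤ 0)
    (hlim : Tendsto (fun t => r t * stdPDF t) atTop (𝓝 0)) :
    stdCDF (-a) ≤ r a * stdPDF a := by
  have := nonneg_of_hasDerivAt_nonpos_of_tendsto_zero
    (fun t ht => hasDerivAt_mul_stdPDF_sub_stdCDF_neg (hr t ht))
    (fun t ht => mul_nonpos_of_nonpos_of_nonneg (hsign t ht) (stdPDF_pos t).le)
    (by simpa using hlim.sub tendsto_stdCDF_neg_atTop)
  linarith

lemma mul_stdPDF_le_stdCDF_neg (hr : ∀ t ∈ Ici a, HasDerivAt r (r' t) t)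
    (hsign : ∀ t ∈ Ioi a, 0 ≤ r' t - t * r t + 1)
    (hlim : Tendsto (fun t => r t * stdPDF t) atTop (𝓝 0)) :
    r a * stdPDF a ≤ stdCDF (-a) := by
  have := nonpos_of_hasDerivAt_nonneg_of_tendsto_zero
    (fun t ht => hasDerivAt_mul_stdPDF_sub_stdCDF_neg (hr t ht))
    (fun t ht => mul_nonneg (hsign t ht) (stdPDF_pos t).le)
    (by simpa using hlim.sub tendsto_stdCDF_neg_atTop)
  linarith

end MillsRatio

lemma mills_upper {a : ℝ} (ha : 0 < a) : a * (a^2 + 3) * stdCDF (-a) ≤ (a^2 + 2) * stdPDF a := by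
  have h : stdCDF (-a) ≤ (a^2 + 2) / (a * (a^2 + 3)) * stdPDF a := by
    refine stdCDF_neg_le_mul_stdPDF (r := fun t => (t^2 + 2) / (t * (t^2 + 3)))
      (r' := fun t => (2*t * (t * (t^2 + 3)) - (t^2 + 2) * (3*t^2 + 3)) / (t * (t^2 + 3))^2)
      (fun t ht => ?_) (fun t ht => ?_) (tendsto_mul_stdPDF_atTop_of_bounded (C := 1) ?_)
    · have hden : HasDerivAt (fun t : ℝ => t * (t^2 + 3)) (3*t^2 + 3) t :=
        ((hasDerivAt_id' t).mul ((hasDerivAt_pow 2 t).add_const 3)).congr_deriv (by push_cast; ring)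
      exact (((hasDerivAt_pow 2 t).add_const 2).div hden (by nlinarith [ha.trans_le ht])).congr_deriv
        (by push_cast; ring)
    · have ht0 : 0 < t := ha.trans ht
      calc _ = -(6 / (t * (t^2 + 3))^2) := by field_simp; ring
        _ ≤ 0 := neg_nonpos.mpr (by positivity)
    · filter_upwards [eventually_ge_atTop 1] with t ht
      rw [abs_of_nonneg (by positivity), div_le_one (by positivity)]
      nlinarith
  rw [div_mul_eq_mul_div, le_div_iff₀ (by positivity)] at h
  linarith

lemma mills_lower (a : ℝ) : a * (a^2 + 5) * stdPDF a ≤ (a^4 + 6*a^2 + 3) * stdCDF (-a) := by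
  have h : a * (a^2 + 5) / (a^4 + 6*a^2 + 3) * stdPDF a ≤ stdCDF (-a) := by
    refine mul_stdPDF_le_stdCDF_neg (r := fun t => t * (t^2 + 5) / (t^4 + 6*t^2 + 3))
      (r' := fun t => ((3*t^2 + 5) * (t^4 + 6*t^2 + 3) - t * (t^2 + 5) * (4*t^3 + 12*t))
        / (t^4 + 6*t^2 + 3)^2)
      (fun t _ => ?_) (fun t _ => ?_) (tendsto_mul_stdPDF_atTop_of_bounded (C := 1) ?_)
    · have hnum : HasDerivAt (fun t : ℝ => t * (t^2 + 5)) (3*t^2 + 5) t :=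
        ((hasDerivAt_id' t).mul ((hasDerivAt_pow 2 t).add_const 5)).congr_deriv (by push_cast; ring)
      have hden : HasDerivAt (fun t : ℝ => t^4 + 6*t^2 + 3) (4*t^3 + 12*t) t :=
        (((hasDerivAt_pow 4 t).add ((hasDerivAt_pow 2 t).const_mul 6)).add_const 3).congr_deriv
          (by push_cast; ring)
      exact hnum.div hden (by positivity)
    · calc (0 : ℝ) ≤ 24 / (t^4 + 6*t^2 + 3)^2 := by positivity
        _ = _ := by field_simp; ring
    · filter_upwards [eventually_ge_atTop 1] with t ht
      rw [abs_of_nonneg (by positivity), div_le_one (by positivity)]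
      nlinarith [pow_le_pow_left₀ (by linarith) ht 3]
  rw [div_mul_eq_mul_div, div_le_iff₀ (by positivity)] at h
  linarith

theorem stmt0 (lam : ℝ) (hlam : 0 < lam) :
    4 * stdCDF (-lam) / (lam^2 + 5) ≤ R0 lam ∧
    R0 lam ≤ 4 * stdCDF (-lam) / (lam^2 + 2) := by
  have hlower := mills_lower lam
  have hupper := mills_upper hlam
  rw [R0_eq]
  constructor
  · rw [div_le_iff₀ (by positivity)]
    nlinarith
  · rw [le_div_iff₀ (by positivity)]
    nlinarith
end

section
/- Let G be a probability measure on ℝ and for μ ∈ ℝ let R(μ,λ) = ∫ (s_λ(x+μ) - μ)² φ(x) dx with s_λ(x) = sgn(x)(|x|-λ)_+. Then the Bayes risk R_G(λ) = ∫ R(u,λ) G(du) satisfies R_G(λ) ≤ ρ_G(√(λ²+1)) + R(0,λ), where ρ_G(t) = ∫ (u² ∧ t²) G(du). -/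
open MeasureTheory Set

/-- Soft threshold function s_λ(x) = sgn(x)(|x|-λ)_+. -/
noncomputable def soft (lam x : ℝ) : ℝ := Real.sign x * max (|x| - lam) 0

/-- Soft threshold risk R(μ,λ) = ∫ (s_λ(x+μ)-μ)² φ(x) dx. -/
noncomputable def softRisk (mu lam : ℝ) : ℝ := ∫ x, (soft lam (x + mu) - mu)^2 * stdPDF x

/-- Bayes risk R_G(λ) = ∫ R(u,λ) G(du). -/
noncomputable def bayesRisk (G : Measure ℝ) (lam : ℝ) : ℝ := ∫ u, softRisk u lam ∂G

/-- ρ_G(t) = ∫ (u² ∧ t²) G(du). -/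
noncomputable def rho (G : Measure ℝ) (t : ℝ) : ℝ := ∫ u, min (u^2) (t^2) ∂G

/-!
It suffices to bound the risk pointwise in the mean, `R(μ, λ) ≤ min(μ², λ² + 1) + R(0, λ)`,
and integrate against `G`. The residual `c(y) = y - s_λ(y)` is the clamp of `y` to `[-λ, λ]`:
it is monotone, bounded by `λ`, and equals `±λ` with the sign of `s_λ(y)` where `s_λ(y) ≠ 0`.

* `R(μ, λ) ≤ μ² + R(0, λ)`: with `q = s_λ(x + μ)` and `p = s_λ(x)`, the last property gives
  `q (μ - q + p) ≥ 0`, hence `(q - μ)² ≤ p² + μ² - (q - p)²`.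
* `R(μ, λ) ≤ λ² + 1`: symmetrise in `x ↦ -x` and write `s_λ(±x + μ) - μ = ±x - c(±x + μ)`;
  monotonicity of `c` makes the cross term nonpositive, leaving `2x² + 2λ²` in expectation.
-/

open ProbabilityTheory

section SoftThreshold

variable {lam : ℝ}

lemma sub_soft_eq (hlam : 0 ≤ lam) (y : ℝ) : y - soft lam y = max (-lam) (min y lam) := by
  unfold soft
  rcases lt_trichotomy y 0 with hy | rfl | hy
  · rw [Real.sign_of_neg hy, abs_of_neg hy, min_eq_left (by linarith)]
    rcases le_total y (-lam) with h | h
    · rw [max_eq_left (by linarith), max_eq_left h]; ring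
    · rw [max_eq_right (by linarith), max_eq_right h]; ring
  · simp [hlam]
  · rw [Real.sign_of_pos hy, abs_of_pos hy]
    rcases le_total y lam with h | h
    · rw [max_eq_right (by linarith), min_eq_left h, max_eq_right (by linarith)]; ring
    · rw [max_eq_left (by linarith), min_eq_right h, max_eq_right (by linarith)]; ring

lemma abs_sub_soft_le (hlam : 0 ≤ lam) (y : ℝ) : |y - soft lam y| ≤ lam := by
  rw [sub_soft_eq hlam, abs_le]
  exact ⟨le_max_left _ _, max_le (by linarith) (min_le_right _ _)⟩

lemma monotone_sub_soft (hlam : 0 ≤ lam) : Monotone fun y ↦ y - soft lam y := by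
  intro y z h
  simp only [sub_soft_eq hlam]
  exact max_le_max_left _ (min_le_min_right _ h)

lemma continuous_soft (hlam : 0 ≤ lam) : Continuous (soft lam) := by
  have : soft lam = fun y ↦ y - max (-lam) (min y lam) := by
    funext y; rw [← sub_soft_eq hlam]; ring
  rw [this]; fun_prop

lemma soft_mul_sub_soft (hlam : 0 ≤ lam) (y : ℝ) :
    soft lam y * (y - soft lam y) = lam * |soft lam y| := by
  have h := sub_soft_eq hlam y
  rcases le_total y (-lam) with h1 | h1
  · rw [min_eq_left (by linarith), max_eq_left h1] at h
    rw [show soft lam y = y + lam by linarith, abs_of_nonpos (by linarith)]; ring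
  rcases le_total y lam with h2 | h2
  · rw [min_eq_left h2, max_eq_right h1] at h
    rw [show soft lam y = 0 by linarith]; simp
  · rw [min_eq_right h2, max_eq_right (by linarith)] at h
    rw [show soft lam y = y - lam by linarith, abs_of_nonneg (by linarith)]; ring

lemma soft_mul_sub_soft_sub_nonneg (hlam : 0 ≤ lam) (y z : ℝ) :
    0 ≤ soft lam y * ((y - soft lam y) - (z - soft lam z)) := by
  have hy := soft_mul_sub_soft hlam y
  have hz : soft lam y * (z - soft lam z) ≤ |soft lam y| * lam :=
    calc _ ≤ |soft lam y * (z - soft lam z)| := le_abs_self _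
      _ = |soft lam y| * |z - soft lam z| := abs_mul _ _
      _ ≤ |soft lam y| * lam := mul_le_mul_of_nonneg_left (abs_sub_soft_le hlam z) (abs_nonneg _)
  nlinarith

lemma sq_soft_add_sub_le (hlam : 0 ≤ lam) (x mu : ℝ) :
    (soft lam (x + mu) - mu) ^ 2 ≤ soft lam x ^ 2 + mu ^ 2 := by
  have := soft_mul_sub_soft_sub_nonneg hlam (x + mu) x
  nlinarith [sq_nonneg (soft lam (x + mu) - soft lam x)]

lemma sq_soft_add_sub_add_sq_soft_neg_add_sub_le (hlam : 0 ≤ lam) (x mu : ℝ) :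
    (soft lam (x + mu) - mu) ^ 2 + (soft lam (-x + mu) - mu) ^ 2 ≤ 2 * x ^ 2 + 2 * lam ^ 2 := by
  have hcross : 0 ≤ x * ((x + mu - soft lam (x + mu)) - (-x + mu - soft lam (-x + mu))) := by
    rcases le_total 0 x with hx | hx
    · exact mul_nonneg hx (sub_nonneg.2 (monotone_sub_soft hlam (by linarith)))
    · exact mul_nonneg_of_nonpos_of_nonpos hx (sub_nonpos.2 (monotone_sub_soft hlam (by linarith)))
  have h₁ := abs_sub_soft_le hlam (x + mu)
  have h₂ := abs_sub_soft_le hlam (-x + mu)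
  nlinarith [sq_abs (x + mu - soft lam (x + mu)), sq_abs (-x + mu - soft lam (-x + mu)),
    abs_nonneg (x + mu - soft lam (x + mu)), abs_nonneg (-x + mu - soft lam (-x + mu))]

end SoftThreshold

section Gaussian

lemma stdPDF_eq_gaussianPDFReal : stdPDF = gaussianPDFReal 0 1 := by
  ext x
  simp [stdPDF, gaussianPDFReal, div_eq_inv_mul]

lemma integral_mul_stdPDF (f : ℝ → ℝ) :
    ∫ x, f x * stdPDF x = ∫ x, f x ∂gaussianReal 0 1 := by
  simp [integral_gaussianReal_eq_integral_smul, stdPDF_eq_gaussianPDFReal, mul_comm]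

lemma integral_sq_gaussianReal (m : ℝ) (v : NNReal) :
    ∫ x, x ^ 2 ∂gaussianReal m v = m ^ 2 + v := by
  have h := variance_id_gaussianReal (μ := m) (v := v)
  rw [variance_eq_sub (memLp_id_gaussianReal 2)] at h
  simp only [Pi.pow_apply, id, integral_id_gaussianReal] at h
  linarith

instance isNegInvariant_gaussianReal (v : NNReal) : (gaussianReal 0 v).IsNegInvariant :=
  ⟨by rw [Measure.neg_def, gaussianReal_map_neg, neg_zero]⟩

end Gaussian

section Risk

variable {lam : ℝ}

lemma softRisk_eq_integral_gaussianReal (mu lam : ℝ) :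
    softRisk mu lam = ∫ x, (soft lam (x + mu) - mu) ^ 2 ∂gaussianReal 0 1 :=
  integral_mul_stdPDF _

lemma softRisk_nonneg (mu lam : ℝ) : 0 ≤ softRisk mu lam := by
  rw [softRisk_eq_integral_gaussianReal]; positivity

lemma memLp_soft_add_sub (hlam : 0 ≤ lam) (mu m : ℝ) (v : NNReal) :
    MemLp (fun x ↦ soft lam (x + mu) - mu) 2 (gaussianReal m v) := by
  have hc : MemLp (fun x ↦ x + mu - soft lam (x + mu)) 2 (gaussianReal m v) :=
    memLp_of_bounded (a := -lam) (b := lam)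
      (ae_of_all _ fun x ↦ abs_le.1 (abs_sub_soft_le hlam _))
      ((continuous_add_const mu).sub
        ((continuous_soft hlam).comp (continuous_add_const mu))).aestronglyMeasurable 2
  convert (memLp_id_gaussianReal' 2 ENNReal.ofNat_ne_top).sub hc using 1
  ext x; simp only [Pi.sub_apply, id]; ring

lemma softRisk_le_sq_add_softRisk_zero (hlam : 0 ≤ lam) (mu : ℝ) :
    softRisk mu lam ≤ mu ^ 2 + softRisk 0 lam := by
  have h₀ := (memLp_soft_add_sub hlam 0 0 1).integrable_sq
  simp only [add_zero, sub_zero] at h₀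
  rw [softRisk_eq_integral_gaussianReal, softRisk_eq_integral_gaussianReal]
  calc ∫ x, (soft lam (x + mu) - mu) ^ 2 ∂gaussianReal 0 1
      ≤ ∫ x, (soft lam x ^ 2 + mu ^ 2) ∂gaussianReal 0 1 :=
        integral_mono (memLp_soft_add_sub hlam mu 0 1).integrable_sq
          (h₀.add (integrable_const _)) fun x ↦ sq_soft_add_sub_le hlam x mu
    _ = mu ^ 2 + ∫ x, (soft lam (x + 0) - 0) ^ 2 ∂gaussianReal 0 1 := by
        rw [integral_add h₀ (integrable_const _)]; simp [add_comm]

lemma softRisk_le_sq_add_one (hlam : 0 ≤ lam) (mu : ℝ) : softRisk mu lam ≤ lam ^ 2 + 1 := by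
  set f := fun x ↦ (soft lam (x + mu) - mu) ^ 2
  have hf : Integrable f (gaussianReal 0 1) := (memLp_soft_add_sub hlam mu 0 1).integrable_sq
  have hx : Integrable (fun x : ℝ ↦ 2 * x ^ 2) (gaussianReal 0 1) :=
    (memLp_id_gaussianReal' 2 ENNReal.ofNat_ne_top).integrable_sq.const_mul 2
  have hsym : 2 * softRisk mu lam = ∫ x, (f x + f (-x)) ∂gaussianReal 0 1 := by
    rw [integral_add hf hf.comp_neg, integral_neg_eq_self, softRisk_eq_integral_gaussianReal]
    ring
  have hmono : ∫ x, (f x + f (-x)) ∂gaussianReal 0 1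
      ≤ ∫ x, (2 * x ^ 2 + 2 * lam ^ 2) ∂gaussianReal 0 1 :=
    integral_mono (hf.add hf.comp_neg) (hx.add (integrable_const _))
      fun x ↦ sq_soft_add_sub_add_sq_soft_neg_add_sub_le hlam x mu
  rw [integral_add hx (integrable_const _), integral_const_mul, integral_sq_gaussianReal] at hmono
  simp only [integral_const, probReal_univ, smul_eq_mul, one_mul, NNReal.coe_one] at hmono
  linarith

lemma softRisk_le_min_add (hlam : 0 ≤ lam) (mu : ℝ) :
    softRisk mu lam ≤ min (mu ^ 2) (lam ^ 2 + 1) + softRisk 0 lam := by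
  rcases min_cases (mu ^ 2) (lam ^ 2 + 1) with ⟨h, -⟩ | ⟨h, -⟩ <;> rw [h]
  · exact softRisk_le_sq_add_softRisk_zero hlam mu
  · linarith [softRisk_le_sq_add_one hlam mu, softRisk_nonneg 0 lam]

end Risk

theorem stmt5 (G : Measure ℝ) [IsProbabilityMeasure G] (lam : ℝ) (hlam : 0 ≤ lam) :
    bayesRisk G lam ≤ rho G (Real.sqrt (lam^2 + 1)) + softRisk 0 lam := by
  set t := Real.sqrt (lam ^ 2 + 1)
  have ht : t ^ 2 = lam ^ 2 + 1 := Real.sq_sqrt (by positivity)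
  have hmin : Integrable (fun u : ℝ ↦ min (u ^ 2) (t ^ 2)) G :=
    Integrable.of_bound (by fun_prop) _ (ae_of_all _ fun u ↦ by
      rw [Real.norm_of_nonneg (by positivity)]; exact min_le_right _ _)
  calc bayesRisk G lam
      ≤ ∫ u, (min (u ^ 2) (t ^ 2) + softRisk 0 lam) ∂G :=
        integral_mono_of_nonneg (ae_of_all _ fun u ↦ softRisk_nonneg u lam)
          (hmin.add (integrable_const _))
          (ae_of_all _ fun u ↦ ht ▸ softRisk_le_min_add hlam u)
    _ = rho G t + softRisk 0 lam := by
        rw [integral_add hmin (integrable_const _)]; simp [rho]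
end

section
/- Let 1 ≤ κ₀ < 2, let s_λ(x) = sgn(x)(|x|-λ)_+ and f_λ(x) = sgn(x) min(|x|, κ₀(|x|-λ)_+), and suppose t_λ: ℝ → ℝ satisfies s_λ(x) ≤ t_λ(x) ≤ f_λ(x) for x ≥ 0 and f_λ(x) ≤ t_λ(x) ≤ s_λ(x) for x < 0. Then for all μ ∈ ℝ, x ∈ ℝ and λ ≥ 0, |t_λ(x) - μ| ≤ max(|μ|, C₀(|x-μ|-λ)_+), where C₀ = κ₀/(2-κ₀). -/
/-- Firm threshold f_λ(x) = sgn(x) min(|x|, κ₀(|x|-λ)_+). -/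
noncomputable def firm (k0 lam x : ℝ) : ℝ := Real.sign x * min |x| (k0 * max (|x| - lam) 0)

theorem abs_sub_le_max_of_nonneg_of_le_mul_max {k0 lam x mu t : ℝ} (hk0 : 1 ≤ k0)
    (hk0' : k0 < 2) (ht₀ : 0 ≤ t) (ht : t ≤ k0 * max (x - lam) 0) :
    |t - mu| ≤ max |mu| (k0 / (2 - k0) * max (|x - mu| - lam) 0) := by
  set B := max |mu| (k0 / (2 - k0) * max (|x - mu| - lam) 0)
  have h_mu : |mu| ≤ B := le_max_left _ _
  rw [abs_sub_le_iff]
  refine ⟨?_, by linarith [le_abs_self mu]⟩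
  rcases le_or_gt x lam with hx | hx
  · rw [max_eq_right (by linarith), mul_zero] at ht
    linarith [neg_le_abs mu]
  · have h2k : 0 < 2 - k0 := by linarith
    have h_pos : x - mu - lam ≤ max (|x - mu| - lam) 0 :=
      (sub_le_sub_right (le_abs_self _) _).trans (le_max_left _ _)
    rw [max_eq_left (sub_nonneg.mpr hx.le)] at ht
    calc t - mu ≤ k0 * (x - lam) - mu := by linarith
      _ = (2 - k0) * (k0 / (2 - k0) * (x - mu - lam)) + (k0 - 1) * mu := by
        field_simp; ring
      _ ≤ (2 - k0) * B + (k0 - 1) * B := by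
        have h_C : k0 / (2 - k0) * (x - mu - lam) ≤ B :=
          (mul_le_mul_of_nonneg_left h_pos (by positivity)).trans (le_max_right _ _)
        have h_mu' : mu ≤ B := (le_abs_self mu).trans h_mu
        gcongr
      _ = B := by ring

theorem Real.sign_mul_mem_Icc_of_nonneg {x a : ℝ} (hx : 0 ≤ x) (ha : 0 ≤ a) :
    Real.sign x * a ∈ Set.Icc 0 a := by
  rcases hx.eq_or_lt with rfl | hx
  · simp [ha]
  · simp [Real.sign_of_pos hx, ha]

theorem soft_nonneg {x : ℝ} (lam : ℝ) (hx : 0 ≤ x) : 0 ≤ soft lam x :=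
  (Real.sign_mul_mem_Icc_of_nonneg hx (le_max_right _ _)).1

theorem firm_le_mul_max {k0 x : ℝ} (lam : ℝ) (hk0 : 0 ≤ k0) (hx : 0 ≤ x) :
    firm k0 lam x ≤ k0 * max (x - lam) 0 := by
  have h_min : 0 ≤ min |x| (k0 * max (|x| - lam) 0) :=
    le_min (abs_nonneg x) (mul_nonneg hk0 (le_max_right _ _))
  calc firm k0 lam x ≤ min |x| (k0 * max (|x| - lam) 0) :=
        (Real.sign_mul_mem_Icc_of_nonneg hx h_min).2
    _ ≤ k0 * max (x - lam) 0 := by rw [abs_of_nonneg hx]; exact min_le_right _ _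

theorem soft_neg (lam x : ℝ) : soft lam (-x) = -soft lam x := by
  simp [soft, Real.sign_neg]

theorem firm_neg (k0 lam x : ℝ) : firm k0 lam (-x) = -firm k0 lam x := by
  simp [firm, Real.sign_neg]

theorem stmt13_general (k0 : ℝ) (hk0 : 1 ≤ k0) (hk0' : k0 < 2) (tfun : ℝ → ℝ) (lam : ℝ)
    (hsand1 : ∀ x : ℝ, 0 ≤ x → soft lam x ≤ tfun x ∧ tfun x ≤ firm k0 lam x)
    (hsand2 : ∀ x : ℝ, x < 0 → firm k0 lam x ≤ tfun x ∧ tfun x ≤ soft lam x) :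
    ∀ (mu x : ℝ), |tfun x - mu| ≤ max |mu| (k0/(2-k0) * max (|x - mu| - lam) 0) := by
  intro mu x
  have hk0₀ : 0 ≤ k0 := by linarith
  rcases le_or_gt 0 x with hx | hx
  · obtain ⟨h_soft, h_firm⟩ := hsand1 x hx
    exact abs_sub_le_max_of_nonneg_of_le_mul_max hk0 hk0'
      ((soft_nonneg lam hx).trans h_soft) (h_firm.trans (firm_le_mul_max lam hk0₀ hx))
  · obtain ⟨h_firm, h_soft⟩ := hsand2 x hx
    have hx' : 0 ≤ -x := by linarith
    have key := abs_sub_le_max_of_nonneg_of_le_mul_max (t := -tfun x) (mu := -mu) hk0 hk0'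
      (by linarith [soft_nonneg lam hx', soft_neg lam x])
      (by linarith [firm_le_mul_max lam hk0₀ hx', firm_neg k0 lam x])
    rwa [neg_sub_neg, abs_sub_comm, neg_sub_neg, abs_sub_comm mu, abs_neg] at key

theorem stmt13 (k0 : ℝ) (hk0 : 1 ≤ k0) (hk0' : k0 < 2) (tfun : ℝ → ℝ) (lam : ℝ) (hlam : 0 ≤ lam)
    (hsand1 : ∀ x : ℝ, 0 ≤ x → soft lam x ≤ tfun x ∧ tfun x ≤ firm k0 lam x)
    (hsand2 : ∀ x : ℝ, x < 0 → firm k0 lam x ≤ tfun x ∧ tfun x ≤ soft lam x) :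
    ∀ (mu x : ℝ), |tfun x - mu| ≤ max |mu| (k0/(2-k0) * max (|x - mu| - lam) 0) :=
  stmt13_general k0 hk0 hk0' tfun lam hsand1 hsand2
end

section
/- Let t_λ be any threshold function sandwiched between soft and firm thresholds as above (s_λ ≤ t_λ ≤ f_λ on x ≥ 0, f_λ ≤ t_λ ≤ s_λ on x < 0, with κ₀ ∈ [1,2)). If X is a random variable with EX = μ and finite variance, then E(t_λ(X) - μ)² ≤ λ² + 2 Var(X) for every λ ≥ 0. -/
open MeasureTheory

/-!
Write the soft threshold as `s_λ(x) = x - g(x)` with `g` the projection onto `[-λ, λ]`; a threshold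
sandwiched between soft and firm lies between `s_λ(x)` and `x`, so `t_λ(x) = x - θ g(x)` with
`θ ∈ [0, 1]`. Centering at `c = g(μ)` instead of `0`, monotonicity of `g` gives
`(g(x) - c)(x - μ) ≥ 0`, and with `θ² + (1 - θ)² ≤ 1` and `g² ≤ λ²` this yields the pointwise bound
`(t_λ(x) - μ)² ≤ λ² + 2(x - μ)² - 2c(x - μ)`. The linear term has mean zero.
-/

open Set

lemma soft_eq_sub_projIcc {lam : ℝ} (hlam : -lam ≤ lam) (x : ℝ) :
    soft lam x = x - projIcc (-lam) lam hlam x := by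
  unfold soft
  rcases lt_or_ge x (-lam) with hx | hx
  · rw [projIcc_of_le_left hlam hx.le, Real.sign_of_neg (by linarith), abs_of_neg (by linarith),
      max_eq_left (by linarith)]
    ring
  rcases le_or_gt x lam with hx' | hx'
  · rw [projIcc_of_mem hlam ⟨hx, hx'⟩, max_eq_right (by cases abs_cases x <;> linarith)]
    ring
  · rw [projIcc_of_right_le hlam hx'.le, Real.sign_of_pos (by linarith), abs_of_pos (by linarith),
      max_eq_left (by linarith)]
    ring

lemma firm_le_self (k0 lam : ℝ) {x : ℝ} (hx : 0 ≤ x) : firm k0 lam x ≤ x := by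
  rcases hx.eq_or_lt with rfl | hx
  · simp [firm]
  · rw [firm, Real.sign_of_pos hx, abs_of_pos hx, one_mul]
    exact min_le_left _ _

lemma self_le_firm (k0 lam : ℝ) {x : ℝ} (hx : x < 0) : x ≤ firm k0 lam x := by
  rw [firm, Real.sign_of_neg hx, abs_of_neg hx]
  linarith [min_le_left (-x) (k0 * max (-x - lam) 0)]

lemma mem_uIcc_soft_self {k0 lam t x : ℝ}
    (hpos : 0 ≤ x → soft lam x ≤ t ∧ t ≤ firm k0 lam x)
    (hneg : x < 0 → firm k0 lam x ≤ t ∧ t ≤ soft lam x) :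
    t ∈ uIcc (soft lam x) x := by
  rcases le_or_gt 0 x with hx | hx
  · exact mem_uIcc.2 (Or.inl ⟨(hpos hx).1, (hpos hx).2.trans (firm_le_self k0 lam hx)⟩)
  · exact mem_uIcc.2 (Or.inr ⟨(self_le_firm k0 lam hx).trans (hneg hx).1, (hneg hx).2⟩)

lemma sq_sub_le_of_mem_uIcc_sub {lam g c x mu t : ℝ} (ht : t ∈ uIcc (x - g) x)
    (hg : g ^ 2 ≤ lam ^ 2) (hmono : 0 ≤ (g - c) * (x - mu)) :
    (t - mu) ^ 2 ≤ lam ^ 2 + 2 * (x - mu) ^ 2 - 2 * c * (x - mu) := by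
  have hbetween : (t - (x - g)) * (t - x) ≤ 0 := by
    rcases mem_uIcc.1 ht with ⟨h₁, h₂⟩ | ⟨h₁, h₂⟩
    · exact mul_nonpos_of_nonneg_of_nonpos (by linarith) (by linarith)
    · exact mul_nonpos_of_nonpos_of_nonneg (by linarith) (by linarith)
  nlinarith [sq_nonneg (2 * x - g - t - mu)]

lemma integral_le_of_le_quadratic {Ω : Type*} [MeasurableSpace Ω] {P : Measure Ω}
    [IsProbabilityMeasure P] {X F : Ω → ℝ} {mu a b c : ℝ} (ha : 0 ≤ a) (hb : 0 ≤ b)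
    (hX2 : MemLp X 2 P) (hmu : ∫ ω, X ω ∂P = mu)
    (hF : ∀ ω, F ω ≤ a + b * (X ω - mu) ^ 2 + c * (X ω - mu)) :
    ∫ ω, F ω ∂P ≤ a + b * ∫ ω, (X ω - mu) ^ 2 ∂P := by
  have hsq : Integrable (fun ω => b * (X ω - mu) ^ 2) P :=
    (hX2.sub (memLp_const mu)).integrable_sq.const_mul b
  have hquad : Integrable (fun ω => a + b * (X ω - mu) ^ 2) P := (integrable_const a).add hsq
  have hlin : Integrable (fun ω => c * (X ω - mu)) P :=
    ((hX2.integrable one_le_two).sub (integrable_const mu)).const_mul c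
  have hcentered : ∫ ω, (X ω - mu) ∂P = 0 := by
    rw [integral_sub (hX2.integrable one_le_two) (integrable_const mu), hmu]
    simp
  by_cases hFi : Integrable F P
  · calc ∫ ω, F ω ∂P ≤ ∫ ω, (a + b * (X ω - mu) ^ 2 + c * (X ω - mu)) ∂P :=
          integral_mono hFi (hquad.add hlin) hF
      _ = a + b * ∫ ω, (X ω - mu) ^ 2 ∂P := by
          rw [integral_add hquad hlin, integral_const_mul, hcentered,
            integral_add (integrable_const a) hsq, integral_const_mul]
          simp
  · rw [integral_undef hFi]
    exact add_nonneg ha (mul_nonneg hb (integral_nonneg fun ω => sq_nonneg _))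

theorem stmt14_general {Ω : Type*} [MeasurableSpace Ω] (P : Measure Ω) [IsProbabilityMeasure P]
    (k0 : ℝ) (tfun : ℝ → ℝ) (lam : ℝ) (hlam : 0 ≤ lam)
    (hsand1 : ∀ x : ℝ, 0 ≤ x → soft lam x ≤ tfun x ∧ tfun x ≤ firm k0 lam x)
    (hsand2 : ∀ x : ℝ, x < 0 → firm k0 lam x ≤ tfun x ∧ tfun x ≤ soft lam x)
    (X : Ω → ℝ) (hX2 : MemLp X 2 P)
    (mu : ℝ) (hmu : ∫ ω, X ω ∂P = mu) :
    ∫ ω, (tfun (X ω) - mu)^2 ∂P ≤ lam^2 + 2 * ∫ ω, (X ω - mu)^2 ∂P := by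
  have hIcc : -lam ≤ lam := by linarith
  set g := fun x => (projIcc (-lam) lam hIcc x : ℝ)
  have hmonovary : Monovary g id :=
    (Subtype.mono_coe _ |>.comp (monotone_projIcc hIcc)).monovary monotone_id
  have hpointwise :
      ∀ x, (tfun x - mu) ^ 2 ≤ lam ^ 2 + 2 * (x - mu) ^ 2 - 2 * g mu * (x - mu) := by
    intro x
    have ht := mem_uIcc_soft_self (hsand1 x) (hsand2 x)
    rw [soft_eq_sub_projIcc hIcc] at ht
    exact sq_sub_le_of_mem_uIcc_sub ht (sq_le_sq' (projIcc _ _ hIcc x).2.1 (projIcc _ _ hIcc x).2.2)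
      (hmonovary.sub_mul_sub_nonneg mu x)
  refine integral_le_of_le_quadratic (c := -2 * g mu) (sq_nonneg lam) zero_le_two hX2 hmu
    fun ω => ?_
  linarith [hpointwise (X ω)]

theorem stmt14 {Ω : Type*} [MeasurableSpace Ω] (P : Measure Ω) [IsProbabilityMeasure P]
    (k0 : ℝ) (hk0 : 1 ≤ k0) (hk0' : k0 < 2) (tfun : ℝ → ℝ) (lam : ℝ) (hlam : 0 ≤ lam)
    (hsand1 : ∀ x : ℝ, 0 ≤ x → soft lam x ≤ tfun x ∧ tfun x ≤ firm k0 lam x)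
    (hsand2 : ∀ x : ℝ, x < 0 → firm k0 lam x ≤ tfun x ∧ tfun x ≤ soft lam x)
    (X : Ω → ℝ) (hXm : Measurable X) (hX2 : MemLp X 2 P)
    (mu : ℝ) (hmu : ∫ ω, X ω ∂P = mu) :
    ∫ ω, (tfun (X ω) - mu)^2 ∂P ≤ lam^2 + 2 * ∫ ω, (X ω - mu)^2 ∂P :=
  stmt14_general P k0 tfun lam hlam hsand1 hsand2 X hX2 mu hmu
end
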